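/- Let β₁, β₂, β₃ ∈ ℝ and let R̃ = β₁(φ̃₉ + φ̃₁₂) + β₂(φ̃₁₀ + φ̃₁₃) + β₃(φ̃₁₁ + φ̃₁₄) be the corresponding correction function on the cube K. Then for every v in the shape space P(K) = P₂(K) + span{x₁³, x₂³, x₃³, x₁x₂x₃}, the Hessian inner product satisfies the exact identity ∫_K Σ_{i,j=1}^{3} (∂²R̃/∂xᵢ∂xⱼ)(∂²v/∂xᵢ∂xⱼ) dx = β₁ ∫_K ∂³v/∂x₁³ dx + β₂ ∫_K ∂³v/∂x₂³ dx + β₃ ∫_K ∂³v/∂x₃³ dx. -/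
import Mathlib


open MeasureTheory

/-- Partial derivative in the first variable of a curried function on `ℝ³`. -/
noncomputable def qd1 (f : ℝ → ℝ → ℝ → ℝ) : ℝ → ℝ → ℝ → ℝ :=
  fun x y z => deriv (fun t => f t y z) x

/-- Partial derivative in the second variable of a curried function on `ℝ³`. -/
noncomputable def qd2 (f : ℝ → ℝ → ℝ → ℝ) : ℝ → ℝ → ℝ → ℝ :=
  fun x y z => deriv (fun t => f x t z) y

/-- Partial derivative in the third variable of a curried function on `ℝ³`. -/
noncomputable def qd3 (f : ℝ → ℝ → ℝ → ℝ) : ℝ → ℝ → ℝ → ℝ :=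
  fun x y z => deriv (fun t => f x y t) z

/-- Membership in the shape space `P(K) = P₂(K) + span{x₁³, x₂³, x₃³, x₁x₂x₃}` of the
three-dimensional cubic Morley element. -/
def MorleyShape3 (w : ℝ → ℝ → ℝ → ℝ) : Prop :=
  ∃ c0 c1 c2 c3 c4 c5 c6 c7 c8 c9 c10 c11 c12 c13 : ℝ, ∀ x y z : ℝ,
    w x y z = c0 + c1 * x + c2 * y + c3 * z + c4 * x ^ 2 + c5 * y ^ 2 + c6 * z ^ 2
      + c7 * (x * y) + c8 * (x * z) + c9 * (y * z)
      + c10 * x ^ 3 + c11 * y ^ 3 + c12 * z ^ 3 + c13 * (x * y * z)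

/-- The correction function
`R̃ = β₁ (φ̃₉ + φ̃₁₂) + β₂ (φ̃₁₀ + φ̃₁₃) + β₃ (φ̃₁₁ + φ̃₁₄)` on the cube `K`,
expressed in the scaled coordinates `ξᵢ = (xᵢ - x_ic)/h`. -/
noncomputable def corr3 (b1 b2 b3 c1 c2 c3 h : ℝ) : ℝ → ℝ → ℝ → ℝ := fun x y z =>
  b1 * ((h / 4) * (((x - c1) / h + 1) ^ 2 * ((x - c1) / h - 1))
      + (h / 4) * (((x - c1) / h + 1) * ((x - c1) / h - 1) ^ 2))
    + b2 * ((h / 4) * (((y - c2) / h + 1) ^ 2 * ((y - c2) / h - 1))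
      + (h / 4) * (((y - c2) / h + 1) * ((y - c2) / h - 1) ^ 2))
    + b3 * ((h / 4) * (((z - c3) / h + 1) ^ 2 * ((z - c3) / h - 1))
      + (h / 4) * (((z - c3) / h + 1) * ((z - c3) / h - 1) ^ 2))

lemma hasDerivAt_cubic (a b c d x : ℝ) :
    HasDerivAt (fun t : ℝ => a + b*t + c*t^2 + d*t^3) (b + 2*c*x + 3*d*x^2) x := by
  have h : HasDerivAt (fun t : ℝ => a + b*t + c*t^2 + d*t^3)
      (((0 + b*1) + c*(2*x^1)) + d*(3*x^2)) x := by
    exact (((hasDerivAt_const x a).add ((hasDerivAt_id x).const_mul b)).add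
      ((hasDerivAt_pow 2 x).const_mul c)).add ((hasDerivAt_pow 3 x).const_mul d)
  convert h using 1
  ring

lemma deriv_cubic (a b c d x : ℝ) :
    deriv (fun t : ℝ => a + b*t + c*t^2 + d*t^3) x = b + 2*c*x + 3*d*x^2 :=
  (hasDerivAt_cubic a b c d x).deriv

lemma key_int (K β c A B h : ℝ) (hne : h ≠ 0) :
    (∫ t in (c - h)..(c + h), (K + 3*β*(t - c)/h^2*(A + B*t))) = K*(2*h) + 2*β*B*h := by
  have hF : ∀ t ∈ Set.uIcc (c - h) (c + h), HasDerivAt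
      (fun t : ℝ => 0 + (K - 3*β*c*A/h^2)*t + ((3*β*A/h^2 - 3*β*c*B/h^2)/2)*t^2
        + ((3*β*B/h^2)/3)*t^3) (K + 3*β*(t - c)/h^2*(A + B*t)) t := by
    intro t _
    have h' := hasDerivAt_cubic 0 (K - 3*β*c*A/h^2) ((3*β*A/h^2 - 3*β*c*B/h^2)/2)
      ((3*β*B/h^2)/3) t
    convert h' using 1
    ring
  rw [intervalIntegral.integral_eq_sub_of_hasDerivAt hF
    ((Continuous.intervalIntegrable (by continuity) _ _))]
  field_simp
  ring

lemma corr_slice (b c h t : ℝ) (hne : h ≠ 0) :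
    b * ((h / 4) * (((t - c) / h + 1) ^ 2 * ((t - c) / h - 1))
      + (h / 4) * (((t - c) / h + 1) * ((t - c) / h - 1) ^ 2))
    = (b*c/2 - b*c^3/(2*h^2)) + (3*b*c^2/(2*h^2) - b/2)*t
      + (-(3*b*c)/(2*h^2))*t^2 + (b/(2*h^2))*t^3 := by
  field_simp
  ring

set_option maxHeartbeats 1000000 in
/-- Exact identity for the Hessian inner product of the correction function against
functions of the 3D cubic Morley shape space. -/
theorem stmt_16 (c1 c2 c3 h : ℝ) (hh : 0 < h) (b1 b2 b3 : ℝ) (v : ℝ → ℝ → ℝ → ℝ)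
    (hv : MorleyShape3 v) :
    (∫ x in (c1 - h)..(c1 + h), ∫ y in (c2 - h)..(c2 + h), ∫ z in (c3 - h)..(c3 + h),
        qd1 (qd1 (corr3 b1 b2 b3 c1 c2 c3 h)) x y z * qd1 (qd1 v) x y z
          + qd1 (qd2 (corr3 b1 b2 b3 c1 c2 c3 h)) x y z * qd1 (qd2 v) x y z
          + qd1 (qd3 (corr3 b1 b2 b3 c1 c2 c3 h)) x y z * qd1 (qd3 v) x y z
          + qd2 (qd1 (corr3 b1 b2 b3 c1 c2 c3 h)) x y z * qd2 (qd1 v) x y z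
          + qd2 (qd2 (corr3 b1 b2 b3 c1 c2 c3 h)) x y z * qd2 (qd2 v) x y z
          + qd2 (qd3 (corr3 b1 b2 b3 c1 c2 c3 h)) x y z * qd2 (qd3 v) x y z
          + qd3 (qd1 (corr3 b1 b2 b3 c1 c2 c3 h)) x y z * qd3 (qd1 v) x y z
          + qd3 (qd2 (corr3 b1 b2 b3 c1 c2 c3 h)) x y z * qd3 (qd2 v) x y z
          + qd3 (qd3 (corr3 b1 b2 b3 c1 c2 c3 h)) x y z * qd3 (qd3 v) x y z)
      = b1 * (∫ x in (c1 - h)..(c1 + h), ∫ y in (c2 - h)..(c2 + h), ∫ z in (c3 - h)..(c3 + h), qd1 (qd1 (qd1 v)) x y z)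
        + b2 * (∫ x in (c1 - h)..(c1 + h), ∫ y in (c2 - h)..(c2 + h), ∫ z in (c3 - h)..(c3 + h), qd2 (qd2 (qd2 v)) x y z)
        + b3 * (∫ x in (c1 - h)..(c1 + h), ∫ y in (c2 - h)..(c2 + h), ∫ z in (c3 - h)..(c3 + h), qd3 (qd3 (qd3 v)) x y z) := by
  obtain ⟨a0, a1, a2, a3, a4, a5, a6, a7, a8, a9, a10, a11, a12, a13, hv⟩ := hv
  have hne : h ≠ 0 := ne_of_gt hh
  have dv1 : ∀ x y z : ℝ, qd1 v x y z = (a1 + a7*y + a8*z + a13*(y*z)) + 2*a4*x + 3*a10*x^2 := by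
    intro x y z
    have hfn : (fun t => v t y z) = fun t => (a0 + a2*y + a3*z + a5*y^2 + a6*z^2 + a9*(y*z) + a11*y^3 + a12*z^3) + (a1 + a7*y + a8*z + a13*(y*z))*t + a4*t^2 + a10*t^3 :=
      funext fun t => by rw [hv]; ring
    rw [show qd1 v x y z = deriv (fun t => v t y z) x from rfl, hfn, deriv_cubic]
  have dv2 : ∀ x y z : ℝ, qd2 v x y z = (a2 + a7*x + a9*z + a13*(x*z)) + 2*a5*y + 3*a11*y^2 := by
    intro x y z
    have hfn : (fun t => v x t z) = fun t => (a0 + a1*x + a3*z + a4*x^2 + a6*z^2 + a8*(x*z) + a10*x^3 + a12*z^3) + (a2 + a7*x + a9*z + a13*(x*z))*t + a5*t^2 + a11*t^3 :=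
      funext fun t => by rw [hv]; ring
    rw [show qd2 v x y z = deriv (fun t => v x t z) y from rfl, hfn, deriv_cubic]
  have dv3 : ∀ x y z : ℝ, qd3 v x y z = (a3 + a8*x + a9*y + a13*(x*y)) + 2*a6*z + 3*a12*z^2 := by
    intro x y z
    have hfn : (fun t => v x y t) = fun t => (a0 + a1*x + a2*y + a4*x^2 + a5*y^2 + a7*(x*y) + a10*x^3 + a11*y^3) + (a3 + a8*x + a9*y + a13*(x*y))*t + a6*t^2 + a12*t^3 :=
      funext fun t => by rw [hv]; ring
    rw [show qd3 v x y z = deriv (fun t => v x y t) z from rfl, hfn, deriv_cubic]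
  have dv11 : ∀ x y z : ℝ, qd1 (qd1 v) x y z = 2*a4 + 6*a10*x := by
    intro x y z
    have hfn : (fun t => qd1 v t y z) = fun t => (a1 + a7*y + a8*z + a13*(y*z)) + (2*a4)*t + (3*a10)*t^2 + 0*t^3 :=
      funext fun t => by rw [dv1]; ring
    rw [show qd1 (qd1 v) x y z = deriv (fun t => qd1 v t y z) x from rfl, hfn, deriv_cubic]
    ring
  have dv21 : ∀ x y z : ℝ, qd2 (qd1 v) x y z = a7 + a13*z := by
    intro x y z
    have hfn : (fun t => qd1 v x t z) = fun t => (a1 + a8*z + 2*a4*x + 3*a10*x^2) + (a7 + a13*z)*t + (0)*t^2 + 0*t^3 :=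
      funext fun t => by rw [dv1]; ring
    rw [show qd2 (qd1 v) x y z = deriv (fun t => qd1 v x t z) y from rfl, hfn, deriv_cubic]
    ring
  have dv31 : ∀ x y z : ℝ, qd3 (qd1 v) x y z = a8 + a13*y := by
    intro x y z
    have hfn : (fun t => qd1 v x y t) = fun t => (a1 + a7*y + 2*a4*x + 3*a10*x^2) + (a8 + a13*y)*t + (0)*t^2 + 0*t^3 :=
      funext fun t => by rw [dv1]; ring
    rw [show qd3 (qd1 v) x y z = deriv (fun t => qd1 v x y t) z from rfl, hfn, deriv_cubic]
    ring
  have dv12 : ∀ x y z : ℝ, qd1 (qd2 v) x y z = a7 + a13*z := by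
    intro x y z
    have hfn : (fun t => qd2 v t y z) = fun t => (a2 + a9*z + 2*a5*y + 3*a11*y^2) + (a7 + a13*z)*t + (0)*t^2 + 0*t^3 :=
      funext fun t => by rw [dv2]; ring
    rw [show qd1 (qd2 v) x y z = deriv (fun t => qd2 v t y z) x from rfl, hfn, deriv_cubic]
    ring
  have dv22 : ∀ x y z : ℝ, qd2 (qd2 v) x y z = 2*a5 + 6*a11*y := by
    intro x y z
    have hfn : (fun t => qd2 v x t z) = fun t => (a2 + a7*x + a9*z + a13*(x*z)) + (2*a5)*t + (3*a11)*t^2 + 0*t^3 :=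
      funext fun t => by rw [dv2]; ring
    rw [show qd2 (qd2 v) x y z = deriv (fun t => qd2 v x t z) y from rfl, hfn, deriv_cubic]
    ring
  have dv32 : ∀ x y z : ℝ, qd3 (qd2 v) x y z = a9 + a13*x := by
    intro x y z
    have hfn : (fun t => qd2 v x y t) = fun t => (a2 + a7*x + 2*a5*y + 3*a11*y^2) + (a9 + a13*x)*t + (0)*t^2 + 0*t^3 :=
      funext fun t => by rw [dv2]; ring
    rw [show qd3 (qd2 v) x y z = deriv (fun t => qd2 v x y t) z from rfl, hfn, deriv_cubic]
    ring
  have dv13 : ∀ x y z : ℝ, qd1 (qd3 v) x y z = a8 + a13*y := by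
    intro x y z
    have hfn : (fun t => qd3 v t y z) = fun t => (a3 + a9*y + 2*a6*z + 3*a12*z^2) + (a8 + a13*y)*t + (0)*t^2 + 0*t^3 :=
      funext fun t => by rw [dv3]; ring
    rw [show qd1 (qd3 v) x y z = deriv (fun t => qd3 v t y z) x from rfl, hfn, deriv_cubic]
    ring
  have dv23 : ∀ x y z : ℝ, qd2 (qd3 v) x y z = a9 + a13*x := by
    intro x y z
    have hfn : (fun t => qd3 v x t z) = fun t => (a3 + a8*x + 2*a6*z + 3*a12*z^2) + (a9 + a13*x)*t + (0)*t^2 + 0*t^3 :=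
      funext fun t => by rw [dv3]; ring
    rw [show qd2 (qd3 v) x y z = deriv (fun t => qd3 v x t z) y from rfl, hfn, deriv_cubic]
    ring
  have dv33 : ∀ x y z : ℝ, qd3 (qd3 v) x y z = 2*a6 + 6*a12*z := by
    intro x y z
    have hfn : (fun t => qd3 v x y t) = fun t => (a3 + a8*x + a9*y + a13*(x*y)) + (2*a6)*t + (3*a12)*t^2 + 0*t^3 :=
      funext fun t => by rw [dv3]; ring
    rw [show qd3 (qd3 v) x y z = deriv (fun t => qd3 v x y t) z from rfl, hfn, deriv_cubic]
    ring
  have d111 : ∀ x y z : ℝ, qd1 (qd1 (qd1 v)) x y z = 6*a10 := by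
    intro x y z
    have hfn : (fun t => qd1 (qd1 v) t y z) = fun t => (2*a4) + (6*a10)*t + 0*t^2 + 0*t^3 :=
      funext fun t => by rw [dv11]; ring
    rw [show qd1 (qd1 (qd1 v)) x y z = deriv (fun t => qd1 (qd1 v) t y z) x from rfl, hfn, deriv_cubic]
    ring
  have d222 : ∀ x y z : ℝ, qd2 (qd2 (qd2 v)) x y z = 6*a11 := by
    intro x y z
    have hfn : (fun t => qd2 (qd2 v) x t z) = fun t => (2*a5) + (6*a11)*t + 0*t^2 + 0*t^3 :=
      funext fun t => by rw [dv22]; ring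
    rw [show qd2 (qd2 (qd2 v)) x y z = deriv (fun t => qd2 (qd2 v) x t z) y from rfl, hfn, deriv_cubic]
    ring
  have d333 : ∀ x y z : ℝ, qd3 (qd3 (qd3 v)) x y z = 6*a12 := by
    intro x y z
    have hfn : (fun t => qd3 (qd3 v) x y t) = fun t => (2*a6) + (6*a12)*t + 0*t^2 + 0*t^3 :=
      funext fun t => by rw [dv33]; ring
    rw [show qd3 (qd3 (qd3 v)) x y z = deriv (fun t => qd3 (qd3 v) x y t) z from rfl, hfn, deriv_cubic]
    ring
  have dr1 : ∀ x y z : ℝ, qd1 (corr3 b1 b2 b3 c1 c2 c3 h) x y z = 3*b1*(x - c1)^2/(2*h^2) - b1/2 := by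
    intro x y z
    have hfn : (fun t => corr3 b1 b2 b3 c1 c2 c3 h t y z) = fun t => (b2 * ((h / 4) * (((y - c2) / h + 1) ^ 2 * ((y - c2) / h - 1)) + (h / 4) * (((y - c2) / h + 1) * ((y - c2) / h - 1) ^ 2)) + b3 * ((h / 4) * (((z - c3) / h + 1) ^ 2 * ((z - c3) / h - 1)) + (h / 4) * (((z - c3) / h + 1) * ((z - c3) / h - 1) ^ 2)) + (b1*c1/2 - b1*c1^3/(2*h^2))) + (3*b1*c1^2/(2*h^2) - b1/2)*t + (-(3*b1*c1)/(2*h^2))*t^2 + (b1/(2*h^2))*t^3 :=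
      funext fun t => by simp only [corr3]; rw [corr_slice b1 c1 h t hne]; ring
    rw [show qd1 (corr3 b1 b2 b3 c1 c2 c3 h) x y z = deriv (fun t => corr3 b1 b2 b3 c1 c2 c3 h t y z) x from rfl, hfn, deriv_cubic]
    ring
  have dr2 : ∀ x y z : ℝ, qd2 (corr3 b1 b2 b3 c1 c2 c3 h) x y z = 3*b2*(y - c2)^2/(2*h^2) - b2/2 := by
    intro x y z
    have hfn : (fun t => corr3 b1 b2 b3 c1 c2 c3 h x t z) = fun t => (b1 * ((h / 4) * (((x - c1) / h + 1) ^ 2 * ((x - c1) / h - 1)) + (h / 4) * (((x - c1) / h + 1) * ((x - c1) / h - 1) ^ 2)) + b3 * ((h / 4) * (((z - c3) / h + 1) ^ 2 * ((z - c3) / h - 1)) + (h / 4) * (((z - c3) / h + 1) * ((z - c3) / h - 1) ^ 2)) + (b2*c2/2 - b2*c2^3/(2*h^2))) + (3*b2*c2^2/(2*h^2) - b2/2)*t + (-(3*b2*c2)/(2*h^2))*t^2 + (b2/(2*h^2))*t^3 :=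
      funext fun t => by simp only [corr3]; rw [corr_slice b2 c2 h t hne]; ring
    rw [show qd2 (corr3 b1 b2 b3 c1 c2 c3 h) x y z = deriv (fun t => corr3 b1 b2 b3 c1 c2 c3 h x t z) y from rfl, hfn, deriv_cubic]
    ring
  have dr3 : ∀ x y z : ℝ, qd3 (corr3 b1 b2 b3 c1 c2 c3 h) x y z = 3*b3*(z - c3)^2/(2*h^2) - b3/2 := by
    intro x y z
    have hfn : (fun t => corr3 b1 b2 b3 c1 c2 c3 h x y t) = fun t => (b1 * ((h / 4) * (((x - c1) / h + 1) ^ 2 * ((x - c1) / h - 1)) + (h / 4) * (((x - c1) / h + 1) * ((x - c1) / h - 1) ^ 2)) + b2 * ((h / 4) * (((y - c2) / h + 1) ^ 2 * ((y - c2) / h - 1)) + (h / 4) * (((y - c2) / h + 1) * ((y - c2) / h - 1) ^ 2)) + (b3*c3/2 - b3*c3^3/(2*h^2))) + (3*b3*c3^2/(2*h^2) - b3/2)*t + (-(3*b3*c3)/(2*h^2))*t^2 + (b3/(2*h^2))*t^3 :=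
      funext fun t => by simp only [corr3]; rw [corr_slice b3 c3 h t hne]; ring
    rw [show qd3 (corr3 b1 b2 b3 c1 c2 c3 h) x y z = deriv (fun t => corr3 b1 b2 b3 c1 c2 c3 h x y t) z from rfl, hfn, deriv_cubic]
    ring
  have dr11 : ∀ x y z : ℝ, qd1 (qd1 (corr3 b1 b2 b3 c1 c2 c3 h)) x y z = 3*b1*(x - c1)/h^2 := by
    intro x y z
    have hfn : (fun t => qd1 (corr3 b1 b2 b3 c1 c2 c3 h) t y z) = fun t => (3*b1*c1^2/(2*h^2) - b1/2) + (-(6*b1*c1)/(2*h^2))*t + (3*b1/(2*h^2))*t^2 + 0*t^3 :=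
      funext fun t => by rw [dr1]; ring
    rw [show qd1 (qd1 (corr3 b1 b2 b3 c1 c2 c3 h)) x y z = deriv (fun t => qd1 (corr3 b1 b2 b3 c1 c2 c3 h) t y z) x from rfl, hfn, deriv_cubic]
    ring
  have dr21 : ∀ x y z : ℝ, qd2 (qd1 (corr3 b1 b2 b3 c1 c2 c3 h)) x y z = 0 := by
    intro x y z
    have hfn : (fun t => qd1 (corr3 b1 b2 b3 c1 c2 c3 h) x t z) = fun t => (3*b1*(x - c1)^2/(2*h^2) - b1/2) + (0)*t + (0)*t^2 + 0*t^3 :=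
      funext fun t => by rw [dr1]; ring
    rw [show qd2 (qd1 (corr3 b1 b2 b3 c1 c2 c3 h)) x y z = deriv (fun t => qd1 (corr3 b1 b2 b3 c1 c2 c3 h) x t z) y from rfl, hfn, deriv_cubic]
    ring
  have dr31 : ∀ x y z : ℝ, qd3 (qd1 (corr3 b1 b2 b3 c1 c2 c3 h)) x y z = 0 := by
    intro x y z
    have hfn : (fun t => qd1 (corr3 b1 b2 b3 c1 c2 c3 h) x y t) = fun t => (3*b1*(x - c1)^2/(2*h^2) - b1/2) + (0)*t + (0)*t^2 + 0*t^3 :=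
      funext fun t => by rw [dr1]; ring
    rw [show qd3 (qd1 (corr3 b1 b2 b3 c1 c2 c3 h)) x y z = deriv (fun t => qd1 (corr3 b1 b2 b3 c1 c2 c3 h) x y t) z from rfl, hfn, deriv_cubic]
    ring
  have dr12 : ∀ x y z : ℝ, qd1 (qd2 (corr3 b1 b2 b3 c1 c2 c3 h)) x y z = 0 := by
    intro x y z
    have hfn : (fun t => qd2 (corr3 b1 b2 b3 c1 c2 c3 h) t y z) = fun t => (3*b2*(y - c2)^2/(2*h^2) - b2/2) + (0)*t + (0)*t^2 + 0*t^3 :=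
      funext fun t => by rw [dr2]; ring
    rw [show qd1 (qd2 (corr3 b1 b2 b3 c1 c2 c3 h)) x y z = deriv (fun t => qd2 (corr3 b1 b2 b3 c1 c2 c3 h) t y z) x from rfl, hfn, deriv_cubic]
    ring
  have dr22 : ∀ x y z : ℝ, qd2 (qd2 (corr3 b1 b2 b3 c1 c2 c3 h)) x y z = 3*b2*(y - c2)/h^2 := by
    intro x y z
    have hfn : (fun t => qd2 (corr3 b1 b2 b3 c1 c2 c3 h) x t z) = fun t => (3*b2*c2^2/(2*h^2) - b2/2) + (-(6*b2*c2)/(2*h^2))*t + (3*b2/(2*h^2))*t^2 + 0*t^3 :=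
      funext fun t => by rw [dr2]; ring
    rw [show qd2 (qd2 (corr3 b1 b2 b3 c1 c2 c3 h)) x y z = deriv (fun t => qd2 (corr3 b1 b2 b3 c1 c2 c3 h) x t z) y from rfl, hfn, deriv_cubic]
    ring
  have dr32 : ∀ x y z : ℝ, qd3 (qd2 (corr3 b1 b2 b3 c1 c2 c3 h)) x y z = 0 := by
    intro x y z
    have hfn : (fun t => qd2 (corr3 b1 b2 b3 c1 c2 c3 h) x y t) = fun t => (3*b2*(y - c2)^2/(2*h^2) - b2/2) + (0)*t + (0)*t^2 + 0*t^3 :=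
      funext fun t => by rw [dr2]; ring
    rw [show qd3 (qd2 (corr3 b1 b2 b3 c1 c2 c3 h)) x y z = deriv (fun t => qd2 (corr3 b1 b2 b3 c1 c2 c3 h) x y t) z from rfl, hfn, deriv_cubic]
    ring
  have dr13 : ∀ x y z : ℝ, qd1 (qd3 (corr3 b1 b2 b3 c1 c2 c3 h)) x y z = 0 := by
    intro x y z
    have hfn : (fun t => qd3 (corr3 b1 b2 b3 c1 c2 c3 h) t y z) = fun t => (3*b3*(z - c3)^2/(2*h^2) - b3/2) + (0)*t + (0)*t^2 + 0*t^3 :=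
      funext fun t => by rw [dr3]; ring
    rw [show qd1 (qd3 (corr3 b1 b2 b3 c1 c2 c3 h)) x y z = deriv (fun t => qd3 (corr3 b1 b2 b3 c1 c2 c3 h) t y z) x from rfl, hfn, deriv_cubic]
    ring
  have dr23 : ∀ x y z : ℝ, qd2 (qd3 (corr3 b1 b2 b3 c1 c2 c3 h)) x y z = 0 := by
    intro x y z
    have hfn : (fun t => qd3 (corr3 b1 b2 b3 c1 c2 c3 h) x t z) = fun t => (3*b3*(z - c3)^2/(2*h^2) - b3/2) + (0)*t + (0)*t^2 + 0*t^3 :=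
      funext fun t => by rw [dr3]; ring
    rw [show qd2 (qd3 (corr3 b1 b2 b3 c1 c2 c3 h)) x y z = deriv (fun t => qd3 (corr3 b1 b2 b3 c1 c2 c3 h) x t z) y from rfl, hfn, deriv_cubic]
    ring
  have dr33 : ∀ x y z : ℝ, qd3 (qd3 (corr3 b1 b2 b3 c1 c2 c3 h)) x y z = 3*b3*(z - c3)/h^2 := by
    intro x y z
    have hfn : (fun t => qd3 (corr3 b1 b2 b3 c1 c2 c3 h) x y t) = fun t => (3*b3*c3^2/(2*h^2) - b3/2) + (-(6*b3*c3)/(2*h^2))*t + (3*b3/(2*h^2))*t^2 + 0*t^3 :=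
      funext fun t => by rw [dr3]; ring
    rw [show qd3 (qd3 (corr3 b1 b2 b3 c1 c2 c3 h)) x y z = deriv (fun t => qd3 (corr3 b1 b2 b3 c1 c2 c3 h) x y t) z from rfl, hfn, deriv_cubic]
    ring
  have E1 : ∀ x y : ℝ, (∫ z in (c3 - h)..(c3 + h),
        (qd1 (qd1 (corr3 b1 b2 b3 c1 c2 c3 h)) x y z * qd1 (qd1 v) x y z
          + qd1 (qd2 (corr3 b1 b2 b3 c1 c2 c3 h)) x y z * qd1 (qd2 v) x y z
          + qd1 (qd3 (corr3 b1 b2 b3 c1 c2 c3 h)) x y z * qd1 (qd3 v) x y z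
          + qd2 (qd1 (corr3 b1 b2 b3 c1 c2 c3 h)) x y z * qd2 (qd1 v) x y z
          + qd2 (qd2 (corr3 b1 b2 b3 c1 c2 c3 h)) x y z * qd2 (qd2 v) x y z
          + qd2 (qd3 (corr3 b1 b2 b3 c1 c2 c3 h)) x y z * qd2 (qd3 v) x y z
          + qd3 (qd1 (corr3 b1 b2 b3 c1 c2 c3 h)) x y z * qd3 (qd1 v) x y z
          + qd3 (qd2 (corr3 b1 b2 b3 c1 c2 c3 h)) x y z * qd3 (qd2 v) x y z
          + qd3 (qd3 (corr3 b1 b2 b3 c1 c2 c3 h)) x y z * qd3 (qd3 v) x y z))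
      = ((3*b1*(x - c1)/h^2*(2*a4 + 6*a10*x)) + (3*b2*(y - c2)/h^2*(2*a5 + 6*a11*y)))*(2*h) + 2*b3*(6*a12)*h := by
    intro x y
    refine (intervalIntegral.integral_congr (g := fun z =>
        ((3*b1*(x - c1)/h^2*(2*a4 + 6*a10*x)) + (3*b2*(y - c2)/h^2*(2*a5 + 6*a11*y))) + 3*b3*(z - c3)/h^2*(2*a6 + 6*a12*z)) (fun z _ => ?_)).trans
      (key_int _ b3 c3 (2*a6) (6*a12) h hne)
    simp only [dv11, dv12, dv13, dv21, dv22, dv23, dv31, dv32, dv33,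
      dr11, dr12, dr13, dr21, dr22, dr23, dr31, dr32, dr33]
    ring
  have E2 : ∀ x : ℝ, (∫ y in (c2 - h)..(c2 + h),
        (((3*b1*(x - c1)/h^2*(2*a4 + 6*a10*x)) + (3*b2*(y - c2)/h^2*(2*a5 + 6*a11*y)))*(2*h) + 2*b3*(6*a12)*h))
      = ((3*b1*(x - c1)/h^2*(2*a4 + 6*a10*x))*(2*h) + 2*b3*(6*a12)*h)*(2*h) + 2*(2*h*b2)*(6*a11)*h := by
    intro x
    refine (intervalIntegral.integral_congr (g := fun y =>
        ((3*b1*(x - c1)/h^2*(2*a4 + 6*a10*x))*(2*h) + 2*b3*(6*a12)*h) + 3*(2*h*b2)*(y - c2)/h^2*(2*a5 + 6*a11*y))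
        (fun y _ => ?_)).trans (key_int _ (2*h*b2) c2 (2*a5) (6*a11) h hne)
    ring
  have E3 : (∫ x in (c1 - h)..(c1 + h),
        (((3*b1*(x - c1)/h^2*(2*a4 + 6*a10*x))*(2*h) + 2*b3*(6*a12)*h)*(2*h) + 2*(2*h*b2)*(6*a11)*h))
      = ((2*b3*(6*a12)*h)*(2*h) + 2*(2*h*b2)*(6*a11)*h)*(2*h) + 2*(2*h*(2*h*b1))*(6*a10)*h := by
    refine (intervalIntegral.integral_congr (g := fun x =>
        ((2*b3*(6*a12)*h)*(2*h) + 2*(2*h*b2)*(6*a11)*h) + 3*(2*h*(2*h*b1))*(x - c1)/h^2*(2*a4 + 6*a10*x))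
        (fun x _ => ?_)).trans (key_int _ (2*h*(2*h*b1)) c1 (2*a4) (6*a10) h hne)
    ring
  simp only [E1, E2]
  rw [E3]
  simp only [d111, d222, d333, intervalIntegral.integral_const, smul_eq_mul]
  ring
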